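/- arXiv:1903.08520 — 3 statements merged into one kernel-verified Lean document; each statement's English description precedes it below -/
import Mathlib

section
/- Let n ≥ 1, let A : ℝⁿ → ℝⁿ be a linear map, x ∈ ℝⁿ and ε > 0. Then the average integral over the ball B_ε(x) satisfies ⨍_{B_ε(x)} ⟨A(y−x), y−x⟩ dy = (ε²/(n+2)) · trace(A). In particular, taking A to be the Hessian D²v(x) of a twice differentiable function, ⨍_{B_ε(x)} ⟨D²v(x)(y−x), y−x⟩ dy = (ε²/(n+2)) Δv(x). -/
/-!
Translate the ball to the origin and expand `⟪A z, z⟫ = ∑ᵢ ⟪bᵢ, z⟫ ⟪A bᵢ, z⟫` in an orthonormal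
basis. Since the ball and Lebesgue measure are invariant under reflections, the moment
`∫_{B_r} ⟪u, z⟫ ⟪v, z⟫` vanishes for `u ⊥ v` (reflect in `uᗮ`) and `∫_{B_r} ⟪u, z⟫²` is the same
for all unit vectors `u` (reflect one onto the other); summing over a basis, the latter equals
`(1/n) ∫_{B_r} ‖z‖²`. Hence `∫_{B_r} ⟪A z, z⟫ = tr A · (1/n) ∫_{B_r} ‖z‖²`, and polar coordinates
give `∫_{B_r} ‖z‖² = n/(n+2) · r² · |B_r|`.
-/

open MeasureTheory Metric Set Module
open scoped RealInnerProductSpace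

theorem Continuous.integrableOn_ball {X F : Type*} [MetricSpace X] [ProperSpace X]
    [MeasurableSpace X] [OpensMeasurableSpace X] {μ : Measure X} [IsFiniteMeasureOnCompacts μ]
    [NormedAddCommGroup F] {f : X → F} (hf : Continuous f) (x : X) (r : ℝ) :
    IntegrableOn f (ball x r) μ :=
  (hf.continuousOn.integrableOn_compact (isCompact_closedBall x r)).mono_set
    ball_subset_closedBall

theorem setIntegral_ball_comp_sub_right {G F : Type*} [NormedAddCommGroup G] [MeasurableSpace G]
    [BorelSpace G] [NormedAddCommGroup F] [NormedSpace ℝ F] (μ : Measure G)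
    [μ.IsAddRightInvariant] (f : G → F) (x : G) (r : ℝ) :
    ∫ y in ball x r, f (y - x) ∂μ = ∫ z in ball 0 r, f z ∂μ := by
  have h := (measurePreserving_sub_right μ x).setIntegral_preimage_emb
    (MeasurableEquiv.subRight x).measurableEmbedding f (ball 0 r)
  rwa [show (· - x) ⁻¹' ball 0 r = ball x r by ext; simp [dist_eq_norm]] at h

section SecondMoment

variable {E : Type*} [NormedAddCommGroup E] [NormedSpace ℝ E] [FiniteDimensional ℝ E]
  [Nontrivial E] [MeasurableSpace E] [BorelSpace E] (μ : Measure E) [μ.IsAddHaarMeasure]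

theorem MeasureTheory.Measure.addHaar_real_ball (x : E) {r : ℝ} (hr : 0 ≤ r) :
    μ.real (ball x r) = r ^ finrank ℝ E * μ.real (ball 0 1) := by
  rw [measureReal_def, Measure.addHaar_ball μ x hr, ENNReal.toReal_mul,
    ENNReal.toReal_ofReal (by positivity), measureReal_def]

theorem setIntegral_ball_norm_pow (k : ℕ) {r : ℝ} (hr : 0 ≤ r) :
    ∫ x in ball (0 : E) r, ‖x‖ ^ k ∂μ =
      finrank ℝ E / (finrank ℝ E + k) * r ^ k * μ.real (ball 0 r) := by
  obtain ⟨m, hm⟩ : ∃ m, finrank ℝ E = m + 1 := Nat.exists_eq_add_one.mpr finrank_pos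
  have h_radial : ∫ y in Ioi (0 : ℝ), y ^ (finrank ℝ E - 1) • (Iio r).indicator (· ^ k) y =
      r ^ (m + k + 1) / (m + k + 1) := by
    calc ∫ y in Ioi (0 : ℝ), y ^ (finrank ℝ E - 1) • (Iio r).indicator (· ^ k) y
        = ∫ y in Ioi (0 : ℝ), (Iio r).indicator (· ^ (m + k)) y := by
          congr 1 with y
          by_cases hy : y < r <;> simp [hy, hm, pow_add]
      _ = ∫ y in (0 : ℝ)..r, y ^ (m + k) := by
          rw [setIntegral_indicator measurableSet_Iio, intervalIntegral.integral_of_le hr,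
            integral_Ioc_eq_integral_Ioo, Ioi_inter_Iio]
      _ = r ^ (m + k + 1) / (m + k + 1) := by simp [integral_pow]
  have h_indicator : (ball (0 : E) r).indicator (‖·‖ ^ k) =
      fun x ↦ (Iio r).indicator (· ^ k) ‖x‖ := by
    ext x; simp [indicator]
  have : (m + k + 1 : ℝ) ≠ 0 := by positivity
  rw [← integral_indicator measurableSet_ball, h_indicator, integral_fun_norm_addHaar μ,
    h_radial, Measure.addHaar_real_ball μ 0 hr, hm, nsmul_eq_mul, smul_eq_mul,
    add_right_comm (m : ℝ)]
  push_cast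
  field_simp
  ring

end SecondMoment

section QuadraticMoments

variable {E : Type*} [NormedAddCommGroup E] [InnerProductSpace ℝ E] [FiniteDimensional ℝ E]
  [MeasurableSpace E] [BorelSpace E]

theorem setIntegral_ball_comp_linearIsometryEquiv {F : Type*} [NormedAddCommGroup F]
    [NormedSpace ℝ F] (g : E ≃ₗᵢ[ℝ] E) (f : E → F) (r : ℝ) :
    ∫ z in ball 0 r, f (g z) = ∫ z in ball 0 r, f z := by
  have h := g.measurePreserving.setIntegral_preimage_emb g.toHomeomorph.measurableEmbedding f
    (ball 0 r)
  rwa [g.preimage_ball, map_zero] at h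

theorem setIntegral_ball_inner_mul_inner_map (g : E ≃ₗᵢ[ℝ] E) (u v : E) (r : ℝ) :
    ∫ z in ball 0 r, ⟪g u, z⟫ * ⟪g v, z⟫ = ∫ z in ball 0 r, ⟪u, z⟫ * ⟪v, z⟫ := by
  rw [← setIntegral_ball_comp_linearIsometryEquiv g]
  simp only [LinearIsometryEquiv.inner_map_map]

theorem setIntegral_ball_inner_mul_inner_of_inner_eq_zero {u v : E} (h : ⟪u, v⟫ = 0) (r : ℝ) :
    ∫ z in ball 0 r, ⟪u, z⟫ * ⟪v, z⟫ = 0 := by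
  have hv : v ∈ (ℝ ∙ u)ᗮ := Submodule.mem_orthogonal_singleton_iff_inner_right.mpr h
  have h_neg := setIntegral_ball_inner_mul_inner_map (ℝ ∙ u)ᗮ.reflection u v r
  rw [Submodule.reflection_orthogonalComplement_singleton_eq_neg,
    Submodule.reflection_mem_subspace_eq_self hv] at h_neg
  simp only [inner_neg_left, neg_mul, integral_neg] at h_neg
  linarith

theorem setIntegral_ball_inner_sq_eq_of_norm_eq {u v : E} (h : ‖u‖ = ‖v‖) (r : ℝ) :
    ∫ z in ball 0 r, ⟪u, z⟫ ^ 2 = ∫ z in ball 0 r, ⟪v, z⟫ ^ 2 := by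
  simp only [sq]
  rw [← setIntegral_ball_inner_mul_inner_map (ℝ ∙ (u - v))ᗮ.reflection u u r,
    Submodule.reflection_sub h]

theorem setIntegral_ball_inner_sq_of_norm_eq_one {u : E} (hu : ‖u‖ = 1) (r : ℝ) :
    ∫ z in ball 0 r, ⟪u, z⟫ ^ 2 = (∫ z in ball (0 : E) r, ‖z‖ ^ 2) / finrank ℝ E := by
  have : Nontrivial E := ⟨u, 0, norm_ne_zero_iff.mp (by simp [hu])⟩
  have hn : (finrank ℝ E : ℝ) ≠ 0 := by exact_mod_cast finrank_pos.ne'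
  let b := stdOrthonormalBasis ℝ E
  have h_sum : ∫ z in ball (0 : E) r, ‖z‖ ^ 2 = ∑ i, ∫ z in ball 0 r, ⟪b i, z⟫ ^ 2 := by
    simp_rw [← b.sum_sq_inner_right]
    exact integral_finsetSum _ fun i _ ↦ (by fun_prop : Continuous _).integrableOn_ball 0 r
  rw [h_sum, Finset.sum_congr rfl fun i _ ↦
      setIntegral_ball_inner_sq_eq_of_norm_eq ((b.norm_eq_one i).trans hu.symm) r,
    Finset.sum_const, Finset.card_univ, Fintype.card_fin, nsmul_eq_mul]
  field_simp

theorem setIntegral_ball_inner_mul_inner_of_norm_eq_one {u : E} (hu : ‖u‖ = 1) (w : E) (r : ℝ) :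
    ∫ z in ball 0 r, ⟪u, z⟫ * ⟪w, z⟫ =
      ⟪u, w⟫ * ((∫ z in ball (0 : E) r, ‖z‖ ^ 2) / finrank ℝ E) := by
  set w' := w - ⟪u, w⟫ • u
  have h_orth : ⟪u, w'⟫ = 0 := by simp [w', inner_sub_right, inner_smul_right, hu]
  calc ∫ z in ball 0 r, ⟪u, z⟫ * ⟪w, z⟫
      = ∫ z in ball 0 r, (⟪u, w⟫ * ⟪u, z⟫ ^ 2 + ⟪u, z⟫ * ⟪w', z⟫) := by
        congr 1 with z
        simp only [w', inner_sub_left, real_inner_smul_left]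
        ring
    _ = ⟪u, w⟫ * ∫ z in ball 0 r, ⟪u, z⟫ ^ 2 := by
        rw [integral_add ((by fun_prop : Continuous _).integrableOn_ball 0 r)
            ((by fun_prop : Continuous _).integrableOn_ball 0 r), integral_const_mul,
          setIntegral_ball_inner_mul_inner_of_inner_eq_zero h_orth, add_zero]
    _ = _ := by rw [setIntegral_ball_inner_sq_of_norm_eq_one hu]

theorem setIntegral_ball_inner_map_self (A : E →ₗ[ℝ] E) (r : ℝ) :
    ∫ z in ball 0 r, ⟪A z, z⟫ =
      LinearMap.trace ℝ E A * ((∫ z in ball (0 : E) r, ‖z‖ ^ 2) / finrank ℝ E) := by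
  let b := stdOrthonormalBasis ℝ E
  have h_expand : ∀ z, ⟪A z, z⟫ = ∑ i, ⟪b i, z⟫ * ⟪A (b i), z⟫ := fun z ↦ by
    calc ⟪A z, z⟫ = ⟪A (∑ i, ⟪b i, z⟫ • b i), z⟫ := by rw [b.sum_repr']
      _ = _ := by simp [sum_inner, real_inner_smul_left]
  simp_rw [h_expand, LinearMap.trace_eq_sum_inner A b, Finset.sum_mul,
    ← setIntegral_ball_inner_mul_inner_of_norm_eq_one (b.norm_eq_one _)]
  exact integral_finsetSum _ fun i _ ↦ (by fun_prop : Continuous _).integrableOn_ball 0 r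

theorem setAverage_ball_inner_map_sub_self [Nontrivial E] (A : E →ₗ[ℝ] E) (x : E) {r : ℝ}
    (hr : 0 < r) :
    ⨍ y in ball x r, ⟪A (y - x), y - x⟫ = r ^ 2 / (finrank ℝ E + 2) * LinearMap.trace ℝ E A := by
  have hn : (finrank ℝ E : ℝ) ≠ 0 := by exact_mod_cast finrank_pos.ne'
  have h_vol : volume.real (ball (0 : E) r) ≠ 0 :=
    ENNReal.toReal_ne_zero.mpr ⟨(measure_ball_pos volume 0 hr).ne', measure_ball_lt_top.ne⟩
  rw [setAverage_eq, setIntegral_ball_comp_sub_right volume (fun z ↦ ⟪A z, z⟫),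
    setIntegral_ball_inner_map_self, setIntegral_ball_norm_pow volume 2 hr.le,
    Measure.addHaar_real_ball_center, smul_eq_mul, Nat.cast_ofNat]
  field_simp

end QuadraticMoments

/-- Mean value of the quadratic form `⟨A(y−x), y−x⟩` over the ball `B_ε(x)` equals
`ε²/(n+2) · trace A`. -/
theorem average_quadratic_form_over_ball
    (n : ℕ) (hn : 1 ≤ n)
    (A : EuclideanSpace ℝ (Fin n) →ₗ[ℝ] EuclideanSpace ℝ (Fin n))
    (x : EuclideanSpace ℝ (Fin n)) (ε : ℝ) (hε : 0 < ε) :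
    (⨍ y in ball x ε, (inner ℝ (A (y - x)) (y - x) : ℝ)) =
      ε ^ 2 / ((n : ℝ) + 2) * LinearMap.trace ℝ (EuclideanSpace ℝ (Fin n)) A := by
  have : Nontrivial (EuclideanSpace ℝ (Fin n)) :=
    Module.nontrivial_of_finrank_pos (R := ℝ) (by rw [finrank_euclideanSpace_fin]; exact hn)
  simpa using setAverage_ball_inner_map_sub_self A x hε
end

section
/- Let n ≥ 1, 2 < p < ∞, let Ω ⊂ ℝⁿ be a bounded open set, T > 0, ε > 0, and M ≥ 0. Suppose u : ℝⁿ × ℝ → ℝ is a bounded Borel measurable function satisfying the DPP with parameter ε at every point (x,t) ∈ Ω × (0,T], and |u(y,s)| ≤ M for every point (y,s) ∉ Ω × (0,T]. Then |u(x,t)| ≤ M for every (x,t) ∈ ℝⁿ × ℝ. -/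
/-!
Each DPP value is a convex combination, with weights `β, α ≥ 0` summing to `1`, of an average
and a supremum of midpoints of values one time step `ε²` earlier, so it lies in `[-M, M]` as soon
as all values at that earlier time do. Going back finitely many steps reaches times `t ≤ 0`, which
lie outside `Ω × (0,T]`, where the bound holds by hypothesis.
-/

open MeasureTheory Metric Set

/-- `u` satisfies the dynamic programming principle with parameter `ε` at `(x,t)`:
`u(x,t) = β ⨍_{B_ε(x)} u(y,t−ε²) dy + α sup_{|σ|=1} (u(x+εσ,t−ε²)+u(x−εσ,t−ε²))/2`,
where `α = (p−2)/(p+n)`, `β = (n+2)/(p+n)`. -/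
def SatisfiesDPPAt (n : ℕ) (p ε : ℝ) (u : EuclideanSpace ℝ (Fin n) × ℝ → ℝ)
    (x : EuclideanSpace ℝ (Fin n)) (t : ℝ) : Prop :=
  u (x, t) = (((n : ℝ) + 2) / (p + n)) * (⨍ y in ball x ε, u (y, t - ε ^ 2)) +
    ((p - 2) / (p + n)) *
      (⨆ σ : sphere (0 : EuclideanSpace ℝ (Fin n)) 1,
        (u (x + ε • (σ : EuclideanSpace ℝ (Fin n)), t - ε ^ 2) +
         u (x - ε • (σ : EuclideanSpace ℝ (Fin n)), t - ε ^ 2)) / 2)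

theorem abs_iSup_le_of_forall_abs_le {ι : Type*} {f : ι → ℝ} {M : ℝ} (hM : 0 ≤ M)
    (hf : ∀ i, |f i| ≤ M) : |⨆ i, f i| ≤ M := by
  refine abs_le.2 ⟨?_, Real.iSup_le (fun i ↦ (abs_le.1 (hf i)).2) hM⟩
  rcases isEmpty_or_nonempty ι with _ | ⟨⟨i⟩⟩
  · simpa using hM
  · have hbdd : BddAbove (range f) := ⟨M, forall_mem_range.2 fun j ↦ (abs_le.1 (hf j)).2⟩
    exact (abs_le.1 (hf i)).1.trans (le_ciSup hbdd i)

theorem abs_average_le_of_forall_abs_le {α : Type*} [MeasurableSpace α] (μ : Measure α)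
    {f : α → ℝ} {M : ℝ} (hM : 0 ≤ M) (hf : ∀ x, |f x| ≤ M) : |⨍ x, f x ∂μ| ≤ M := by
  -- No integrability is needed: the junk value `0` of the average also lies in `[-M, M]`.
  rw [average_eq, smul_eq_mul, abs_mul, abs_inv, abs_of_nonneg measureReal_nonneg]
  by_cases hμ : IsFiniteMeasure μ
  · rcases eq_or_lt_of_le (measureReal_nonneg (μ := μ) (s := univ)) with h0 | hpos
    · simp [← h0, hM]
    · rw [inv_mul_le_iff₀ hpos, mul_comm]
      have hf' : ∀ x, ‖f x‖ ≤ M := hf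
      exact norm_integral_le_of_norm_le_const (.of_forall hf')
  · simp [measureReal_def, not_isFiniteMeasure_iff.1 hμ, hM]

theorem forall_of_le_zero_of_step {X : Type*} {P : X → ℝ → Prop} {h : ℝ} (hh : 0 < h)
    (base : ∀ x t, t ≤ 0 → P x t) (step : ∀ x t, (∀ y, P y (t - h)) → P x t) (x : X) (t : ℝ) :
    P x t := by
  suffices ∀ k : ℕ, ∀ x t, t ≤ k * h → P x t by
    obtain ⟨k, hk⟩ := exists_nat_ge (t / h)
    exact this k x t ((div_le_iff₀ hh).1 hk)
  intro k
  induction k with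
  | zero => simpa using base
  | succ k ih =>
    intro x t ht
    exact step x t fun y ↦ ih y _ (by push_cast at ht; linarith)

theorem SatisfiesDPPAt.abs_le {n : ℕ} {p ε : ℝ} {u : EuclideanSpace ℝ (Fin n) × ℝ → ℝ}
    {x : EuclideanSpace ℝ (Fin n)} {t M : ℝ} (hdpp : SatisfiesDPPAt n p ε u x t) (hp : 2 ≤ p)
    (hM : 0 ≤ M) (hprev : ∀ y, |u (y, t - ε ^ 2)| ≤ M) : |u (x, t)| ≤ M := by
  have hpn : 0 < p + n := by linarith [(n.cast_nonneg : (0 : ℝ) ≤ n)]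
  have hβ : 0 ≤ ((n : ℝ) + 2) / (p + n) := by positivity
  have hα : 0 ≤ (p - 2) / (p + n) := div_nonneg (by linarith) hpn.le
  have hweights : ((n : ℝ) + 2) / (p + n) + (p - 2) / (p + n) = 1 := by field_simp; ring
  have hmid : ∀ a b : ℝ, |a| ≤ M → |b| ≤ M → |(a + b) / 2| ≤ M := fun a b ha hb ↦ by
    rw [abs_div, abs_two]
    linarith [abs_add_le a b]
  have havg := abs_average_le_of_forall_abs_le (volume.restrict (ball x ε)) hM fun y ↦ hprev y
  have hsup := abs_iSup_le_of_forall_abs_le hM fun σ : sphere (0 : EuclideanSpace ℝ (Fin n)) 1 ↦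
    hmid _ _ (hprev (x + ε • σ.1)) (hprev (x - ε • σ.1))
  rw [hdpp]
  exact mem_closedBall_zero_iff.1 <| convex_closedBall (0 : ℝ) M (mem_closedBall_zero_iff.2 havg)
    (mem_closedBall_zero_iff.2 hsup) hβ hα hweights

theorem dpp_bound_general
    (n : ℕ) (p : ℝ) (hp : 2 < p)
    (Ω : Set (EuclideanSpace ℝ (Fin n)))
    (T : ℝ) (ε : ℝ) (hε : 0 < ε) (M : ℝ) (hM : 0 ≤ M)
    (u : EuclideanSpace ℝ (Fin n) × ℝ → ℝ)
    (hu_dpp : ∀ x ∈ Ω, ∀ t ∈ Ioc (0 : ℝ) T, SatisfiesDPPAt n p ε u x t)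
    (hbdry : ∀ q : EuclideanSpace ℝ (Fin n) × ℝ, q ∉ Ω ×ˢ Ioc (0 : ℝ) T → |u q| ≤ M) :
    ∀ q : EuclideanSpace ℝ (Fin n) × ℝ, |u q| ≤ M := by
  rintro ⟨x, t⟩
  refine forall_of_le_zero_of_step (P := fun x t ↦ |u (x, t)| ≤ M) (pow_pos hε 2)
    (fun y s hs ↦ hbdry _ fun hmem ↦ hs.not_gt hmem.2.1) (fun y s hprev ↦ ?_) x t
  by_cases hmem : (y, s) ∈ Ω ×ˢ Ioc (0 : ℝ) T
  · exact (hu_dpp y hmem.1 s hmem.2).abs_le hp.le hM hprev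
  · exact hbdry _ hmem

/-- **Maximum principle for the DPP**: a bounded Borel function satisfying the DPP in
`Ω × (0,T]` and bounded by `M` in absolute value outside `Ω × (0,T]` is bounded by `M`
everywhere. -/
theorem dpp_bound
    (n : ℕ) (hn : 1 ≤ n) (p : ℝ) (hp : 2 < p)
    (Ω : Set (EuclideanSpace ℝ (Fin n))) (hΩo : IsOpen Ω)
    (hΩb : Bornology.IsBounded Ω) (T : ℝ) (hT : 0 < T) (ε : ℝ) (hε : 0 < ε) (M : ℝ) (hM : 0 ≤ M)
    (u : EuclideanSpace ℝ (Fin n) × ℝ → ℝ)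
    (hu_bd : ∃ C : ℝ, ∀ q, |u q| ≤ C) (hu_meas : Measurable u)
    (hu_dpp : ∀ x ∈ Ω, ∀ t ∈ Ioc (0 : ℝ) T, SatisfiesDPPAt n p ε u x t)
    (hbdry : ∀ q : EuclideanSpace ℝ (Fin n) × ℝ, q ∉ Ω ×ˢ Ioc (0 : ℝ) T → |u q| ≤ M) :
    ∀ q : EuclideanSpace ℝ (Fin n) × ℝ, |u q| ≤ M :=
  dpp_bound_general n p hp Ω T ε hε M hM u hu_dpp hbdry
end

section
/- Let n ≥ 2, 2 < p < ∞, ξ = n + p − 4, z ∈ ℝⁿ, a, b > 0 and c ∈ ℝ, and define w(x) = −a|x−z|² − b|x−z|^{−ξ} + c for x ∈ ℝⁿ, x ≠ z. Then w satisfies the dominative p-Laplace equation with constant right-hand side: for every x ≠ z, Δw(x) + (p−2) · sup_{|σ|=1} ⟨D²w(x)σ, σ⟩ = −2a(n + p − 2). -/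
/-!
Writing `r = ‖x - z‖²` and `t = -ξ/2`, the barrier is `φ(r)` with `φ(s) = -a s - b s^t + c`.
The Hessian of a function of `r` is `2φ'(r) I + 4φ''(r) v ⊗ v` with `v = x - z`. Since `φ'' < 0`
here, its largest eigenvalue is `2φ'(r)`, attained on `v^⊥` (which is nonzero as `n ≥ 2`), and
its trace is `2nφ'(r) + 4φ''(r) r`. In `2(n + p - 2)φ'(r) + 4rφ''(r)` the `b`-terms are
proportional to `n + p - 2 + 2(t - 1)`, which vanishes exactly for `ξ = n + p - 4`.
-/

open Metric Filter Topology InnerProductSpace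

section RadialHessian

variable {E : Type*} [NormedAddCommGroup E] [InnerProductSpace ℝ E]

noncomputable def radialHessian (α β : ℝ) (v : E) : E →L[ℝ] E →L[ℝ] ℝ :=
  -- `innerSL ℝ` is typed as conjugate-linear; it is `ℝ`-linear only up to defeq
  let inner : E →L[ℝ] E →L[ℝ] ℝ := innerSL ℝ
  α • inner + (β • inner v).smulRight (inner v)

theorem radialHessian_apply (α β : ℝ) (v u u' : E) :
    radialHessian α β v u u' = α * ⟪u, u'⟫_ℝ + β * ⟪v, u⟫_ℝ * ⟪v, u'⟫_ℝ :=
  rfl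

theorem fderiv_fderiv_comp_norm_sub_sq {φ φ' : ℝ → ℝ} {φ'' : ℝ} {x z : E}
    (hφ : ∀ᶠ s in 𝓝 (‖x - z‖ ^ 2), HasDerivAt φ (φ' s) s)
    (hφ' : HasDerivAt φ' φ'' (‖x - z‖ ^ 2)) :
    fderiv ℝ (fderiv ℝ fun y => φ (‖y - z‖ ^ 2)) x =
      radialHessian (2 * φ' (‖x - z‖ ^ 2)) (4 * φ'') (x - z) := by
  have hsq (y : E) : HasFDerivAt (fun y => ‖y - z‖ ^ 2) ((2 : ℝ) • innerSL ℝ (y - z)) y := by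
    simpa [ofNat_smul_eq_nsmul] using ((hasFDerivAt_id y).sub_const z).norm_sq
  have hfirst : fderiv ℝ (fun y => φ (‖y - z‖ ^ 2)) =ᶠ[𝓝 x]
      fun y => (2 * φ' (‖y - z‖ ^ 2)) • innerSL ℝ (y - z) := by
    have hcont : Tendsto (fun y => ‖y - z‖ ^ 2) (𝓝 x) (𝓝 (‖x - z‖ ^ 2)) :=
      ((continuous_id.sub continuous_const).norm.pow 2).tendsto x
    filter_upwards [hcont.eventually hφ] with y hy
    rw [← Function.comp_def φ, (hy.comp_hasFDerivAt y (hsq y)).fderiv, smul_smul, mul_comm]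
  have hcoef :
      HasFDerivAt (fun y => 2 * φ' (‖y - z‖ ^ 2)) ((4 * φ'') • innerSL ℝ (x - z)) x := by
    refine ((hφ'.comp_hasFDerivAt x (hsq x)).const_mul 2).congr_fderiv ?_
    rw [smul_smul, smul_smul]
    ring_nf
  have hinner : HasFDerivAt (fun y => innerSL ℝ (y - z)) (innerSL ℝ : E →L[ℝ] E →L[ℝ] ℝ) x :=
    (innerSL ℝ : E →L[ℝ] E →L[ℝ] ℝ).hasFDerivAt.comp x ((hasFDerivAt_id x).sub_const z)
  have hsecond : HasFDerivAt (fun y => (2 * φ' (‖y - z‖ ^ 2)) • innerSL ℝ (y - z))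
      (radialHessian (2 * φ' (‖x - z‖ ^ 2)) (4 * φ'') (x - z)) x :=
    hcoef.smul hinner
  rw [hfirst.fderiv_eq, hsecond.fderiv]

theorem exists_norm_eq_one_inner_eq_zero (hE : 2 ≤ Module.finrank ℝ E) (v : E) :
    ∃ σ : E, ‖σ‖ = 1 ∧ ⟪v, σ⟫_ℝ = 0 := by
  have : FiniteDimensional ℝ E := Module.finite_of_finrank_pos (by omega)
  obtain ⟨w, hw, hw0⟩ : ∃ w ∈ (ℝ ∙ v)ᗮ, w ≠ 0 := by
    refine Submodule.exists_mem_ne_zero_of_ne_bot fun hbot => ?_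
    have hspan : Module.finrank ℝ (ℝ ∙ v) ≤ 1 := by
      simpa using finrank_span_le_card (R := ℝ) ({v} : Set E)
    have := (ℝ ∙ v).finrank_add_finrank_orthogonal
    rw [hbot, finrank_bot] at this
    omega
  refine ⟨‖w‖⁻¹ • w, by simp [norm_smul, hw0], ?_⟩
  rw [inner_smul_right,
    Submodule.inner_right_of_mem_orthogonal (Submodule.mem_span_singleton_self v) hw, mul_zero]

theorem iSup_sphere_radialHessian (hE : 2 ≤ Module.finrank ℝ E) (α : ℝ) {β : ℝ} (hβ : β ≤ 0)
    (v : E) : ⨆ σ : sphere (0 : E) 1, radialHessian α β v σ σ = α := by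
  have hsphere (σ : sphere (0 : E) 1) : radialHessian α β v σ σ = α + β * ⟪v, σ⟫_ℝ ^ 2 := by
    rw [radialHessian_apply, real_inner_self_eq_norm_sq, norm_eq_of_mem_sphere σ]; ring
  obtain ⟨σ₀, hσ₀, hσ₀v⟩ := exists_norm_eq_one_inner_eq_zero hE v
  have : Nonempty (sphere (0 : E) 1) := ⟨⟨σ₀, by simpa using hσ₀⟩⟩
  refine le_antisymm (ciSup_le fun σ => ?_) ?_
  · rw [hsphere]
    nlinarith [sq_nonneg ⟪v, (σ : E)⟫_ℝ]
  · refine le_ciSup_of_le ⟨α, ?_⟩ ⟨σ₀, by simpa using hσ₀⟩ (by rw [hsphere, hσ₀v]; simp)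
    rintro _ ⟨σ, rfl⟩
    dsimp only
    rw [hsphere]
    nlinarith [sq_nonneg ⟪v, (σ : E)⟫_ℝ]

end RadialHessian

theorem sum_radialHessian_single {ι : Type*} [Fintype ι] [DecidableEq ι] (α β : ℝ)
    (v : EuclideanSpace ℝ ι) :
    ∑ i, radialHessian α β v (EuclideanSpace.single i 1) (EuclideanSpace.single i 1) =
      Fintype.card ι * α + β * ‖v‖ ^ 2 := by
  simp only [radialHessian_apply, EuclideanSpace.inner_single_right, EuclideanSpace.norm_sq_eq]
  simp [Finset.sum_add_distrib, Finset.mul_sum, sq, mul_assoc]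

section BarrierProfile

variable (a b c t : ℝ) {s : ℝ}

noncomputable def barrierProfile (s : ℝ) : ℝ := -a * s - b * s ^ t + c

noncomputable def barrierProfileDeriv (s : ℝ) : ℝ := -a - b * t * s ^ (t - 1)

theorem hasDerivAt_barrierProfile (hs : s ≠ 0) :
    HasDerivAt (barrierProfile a b c t) (barrierProfileDeriv a b t s) s := by
  have h := (((hasDerivAt_id s).const_mul (-a)).sub
    ((Real.hasDerivAt_rpow_const (p := t) (Or.inl hs)).const_mul b)).add_const c
  exact h.congr_deriv (by simp only [barrierProfileDeriv]; ring)

theorem hasDerivAt_barrierProfileDeriv (hs : s ≠ 0) :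
    HasDerivAt (barrierProfileDeriv a b t) (-b * t * (t - 1) * s ^ (t - 2)) s := by
  have h :=
    ((Real.hasDerivAt_rpow_const (p := t - 1) (Or.inl hs)).const_mul (b * t)).const_sub (-a)
  refine h.congr_deriv ?_
  rw [sub_sub, one_add_one_eq_two]
  ring

end BarrierProfile

theorem barrier_dominative_pLaplacian_general
    (n : ℕ) (hn : 2 ≤ n) (p : ℝ) (hp : 2 < p)
    (z : EuclideanSpace ℝ (Fin n)) (a b c : ℝ) (hb : 0 < b)
    (x : EuclideanSpace ℝ (Fin n)) (hx : x ≠ z) :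
    (∑ i : Fin n,
      fderiv ℝ (fderiv ℝ (fun x : EuclideanSpace ℝ (Fin n) =>
        -a * ‖x - z‖ ^ 2 - b * ‖x - z‖ ^ (-((n : ℝ) + p - 4)) + c)) x
        (EuclideanSpace.single i 1) (EuclideanSpace.single i 1)) +
    (p - 2) *
      (⨆ σ : sphere (0 : EuclideanSpace ℝ (Fin n)) 1,
        fderiv ℝ (fderiv ℝ (fun x : EuclideanSpace ℝ (Fin n) =>
          -a * ‖x - z‖ ^ 2 - b * ‖x - z‖ ^ (-((n : ℝ) + p - 4)) + c)) x
          (σ : EuclideanSpace ℝ (Fin n)) (σ : EuclideanSpace ℝ (Fin n))) =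
      -2 * a * ((n : ℝ) + p - 2) := by
  set t : ℝ := -((n : ℝ) + p - 4) / 2 with ht_def
  have ht : t < 0 := by
    have : (2 : ℝ) ≤ n := by exact_mod_cast hn
    linarith
  set r := ‖x - z‖ ^ 2 with hr_def
  have hr : 0 < r := by positivity [sub_ne_zero.mpr hx]
  have hw : (fun y : EuclideanSpace ℝ (Fin n) =>
      -a * ‖y - z‖ ^ 2 - b * ‖y - z‖ ^ (-((n : ℝ) + p - 4)) + c) =
      fun y => barrierProfile a b c t (‖y - z‖ ^ 2) := by
    ext y
    rw [barrierProfile, ← Real.rpow_natCast_mul (norm_nonneg _), Nat.cast_ofNat,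
      mul_div_cancel₀ _ two_ne_zero]
  have hβ : 4 * (-b * t * (t - 1) * r ^ (t - 2)) ≤ 0 := by
    have htt : 0 < t * (t - 1) := mul_pos_of_neg_of_neg ht (by linarith)
    nlinarith [mul_pos (mul_pos hb htt) (Real.rpow_pos_of_pos hr (t - 2))]
  rw [hw, fderiv_fderiv_comp_norm_sub_sq
      ((eventually_ne_nhds hr.ne').mono fun s hs => hasDerivAt_barrierProfile a b c t hs)
      (hasDerivAt_barrierProfileDeriv a b t hr.ne'),
    sum_radialHessian_single, iSup_sphere_radialHessian (by simpa using hn) _ hβ]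
  have hpow : r ^ (t - 1) = r ^ (t - 2) * r := by
    rw [← Real.rpow_add_one hr.ne']
    ring_nf
  simp only [barrierProfileDeriv, Fintype.card_fin, ← hr_def, hpow]
  linear_combination (-4 * b * r ^ (t - 2) * r) * ht_def

/-- **The barrier solves the dominative p-Laplace equation with constant right-hand side.**
For `ξ = n + p − 4` and `w(x) = −a|x−z|² − b|x−z|^{−ξ} + c`, for all `x ≠ z` one has
`Δw(x) + (p−2) sup_{|σ|=1} ⟨D²w(x)σ, σ⟩ = −2a(n+p−2)`. -/
theorem barrier_dominative_pLaplacian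
    (n : ℕ) (hn : 2 ≤ n) (p : ℝ) (hp : 2 < p)
    (z : EuclideanSpace ℝ (Fin n)) (a b c : ℝ) (ha : 0 < a) (hb : 0 < b)
    (x : EuclideanSpace ℝ (Fin n)) (hx : x ≠ z) :
    (∑ i : Fin n,
      fderiv ℝ (fderiv ℝ (fun x : EuclideanSpace ℝ (Fin n) =>
        -a * ‖x - z‖ ^ 2 - b * ‖x - z‖ ^ (-((n : ℝ) + p - 4)) + c)) x
        (EuclideanSpace.single i 1) (EuclideanSpace.single i 1)) +
    (p - 2) *
      (⨆ σ : sphere (0 : EuclideanSpace ℝ (Fin n)) 1,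
        fderiv ℝ (fderiv ℝ (fun x : EuclideanSpace ℝ (Fin n) =>
          -a * ‖x - z‖ ^ 2 - b * ‖x - z‖ ^ (-((n : ℝ) + p - 4)) + c)) x
          (σ : EuclideanSpace ℝ (Fin n)) (σ : EuclideanSpace ℝ (Fin n))) =
      -2 * a * ((n : ℝ) + p - 2) :=
  barrier_dominative_pLaplacian_general n hn p hp z a b c hb x hx
end
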